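/- arXiv:2312.02223 — 4 statements merged into one kernel-verified Lean document; each statement's English description precedes it below -/
import Mathlib

section
/- For every integer r and every non-negative integer n, Σ_{j=0}^{2n−1} (−1)^{j(r+1)} F_{r(2n−2j−1)} = Σ_{j=0}^{n−1} (F_r/2)^{2j} 5^j F_{r(2n−2j−1)} + Σ_{j=1}^{n} (F_r/2)^{2j−1} 5^{j−1} L_{r(2n−2j)}, and the common value of these expressions equals 2·F_{2rn}/L_r (note that L_r ≠ 0 for every integer r). -/
open Finset

/-- Integer-indexed Fibonacci numbers: `fibZ n = F n`, with
`F (-n) = (-1)^(n+1) * F n`. -/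
def fibZ (n : ℤ) : ℤ :=
  if 0 ≤ n then (Nat.fib n.toNat : ℤ) else (-1) ^ (n.natAbs + 1) * (Nat.fib n.natAbs : ℤ)

/-- Integer-indexed Lucas numbers: `lucZ n = L n = F (n+1) + F (n-1)`. -/
def lucZ (n : ℤ) : ℤ := fibZ (n + 1) + fibZ (n - 1)

/-!
Both expressions telescope once multiplied by `L_r`. Writing `ε = (-1)^r`, the identity
`L_r F_k = F_{k+r} + ε F_{k-r}` turns the `j`-th term of the alternating sum, times `L_r`, into
`G_j - G_{j+1}` with `G_j = (-ε)^j F_{r(2n-2j)}`, and `G_{2n} = -F_{2rn}`. With `c = 5 F_r² / 4`,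
the identity `L_r (F_{m+r} + (F_r/2) L_m) = 2 F_{m+2r} - 2c F_m` turns the `j`-th pair of terms of
the other expression, times `L_r`, into `2 (H_j - H_{j+1})` with `H_j = c^j F_{r(2n-2j)}`, and
`H_n = 0`. So both equal `2 F_{2rn} / L_r`, where `L_r ≠ 0`.
-/

theorem fibZ_eq_intFib : fibZ = Int.fib := by
  funext n
  obtain ⟨k, rfl | rfl⟩ := Int.eq_nat_or_neg n
  · simp [fibZ]
  · rcases k.eq_zero_or_pos with rfl | hk
    · simp [fibZ]
    · rw [fibZ, if_neg (by omega), Int.fib_neg_natCast]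
      simp

theorem fib_add_one_eq_fib_sub_one_add_fib (n : ℤ) :
    Int.fib (n + 1) = Int.fib (n - 1) + Int.fib n := by
  simpa [add_comm, show n - 1 + 2 = n + 1 by ring] using Int.fib_add_two (n - 1)

theorem lucZ_eq_two_mul_fib_add_one_sub (n : ℤ) :
    lucZ n = 2 * Int.fib (n + 1) - Int.fib n := by
  rw [lucZ, fibZ_eq_intFib]
  linear_combination -fib_add_one_eq_fib_sub_one_add_fib n

theorem two_mul_fib_add (m n : ℤ) :
    2 * Int.fib (m + n) = Int.fib m * lucZ n + lucZ m * Int.fib n := by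
  have h := fib_add_one_eq_fib_sub_one_add_fib m
  rw [lucZ_eq_two_mul_fib_add_one_sub, lucZ_eq_two_mul_fib_add_one_sub, Int.fib_add]
  linear_combination -2 * Int.fib n * h

theorem lucZ_mul_two_mul_fib_add_fib_mul_lucZ (m r : ℤ) :
    lucZ r * (2 * Int.fib (m + r) + Int.fib r * lucZ m)
      = 4 * Int.fib (m + 2 * r) - 5 * Int.fib r ^ 2 * Int.fib m := by
  have h := fib_add_one_eq_fib_sub_one_add_fib m
  rw [lucZ_eq_two_mul_fib_add_one_sub, lucZ_eq_two_mul_fib_add_one_sub, Int.fib_add m r,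
    Int.fib_add m (2 * r), Int.fib_two_mul, Int.fib_two_mul_add_one]
  linear_combination 2 * Int.fib r * (2 * Int.fib (r + 1) - Int.fib r) * h

theorem coe_lucZ_neg (n : ℤ) : (lucZ (-n) : ℚ) = (-1) ^ n * lucZ n := by
  have h := fib_add_one_eq_fib_sub_one_add_fib n
  rw [lucZ_eq_two_mul_fib_add_one_sub, lucZ_eq_two_mul_fib_add_one_sub,
    show -n + 1 = -(n - 1) by ring]
  push_cast
  rw [Int.coe_fib_neg, Int.coe_fib_neg, sub_add_cancel, zpow_add_one₀ (by norm_num), h]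
  push_cast
  ring

theorem lucZ_mul_fib (r k : ℤ) :
    (lucZ r * Int.fib k : ℚ) = Int.fib (k + r) + (-1) ^ r * Int.fib (k - r) := by
  have hplus : (2 * Int.fib (k + r) : ℚ) = Int.fib k * lucZ r + lucZ k * Int.fib r := by
    exact_mod_cast two_mul_fib_add k r
  have hminus : (2 * Int.fib (k + -r) : ℚ) = Int.fib k * lucZ (-r) + lucZ k * Int.fib (-r) := by
    exact_mod_cast two_mul_fib_add k (-r)
  have hsq : ((-1 : ℚ) ^ r) ^ 2 = 1 := by
    rw [← zpow_natCast, ← zpow_mul]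
    exact Even.neg_one_zpow ⟨r, by ring⟩
  rw [← sub_eq_add_neg, coe_lucZ_neg, Int.coe_fib_neg, zpow_add_one₀ (by norm_num)] at hminus
  linear_combination -(1 / 2 : ℚ) * hplus - (-1) ^ r / 2 * hminus
    - (lucZ r * Int.fib k - lucZ k * Int.fib r : ℚ) / 2 * hsq

theorem lucZ_natCast_pos (k : ℕ) : 0 < lucZ k := by
  rw [lucZ_eq_two_mul_fib_add_one_sub, ← Nat.cast_one, ← Nat.cast_add, Int.fib_natCast,
    Int.fib_natCast]
  have hmono := Nat.fib_le_fib_succ (n := k)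
  have hpos := Nat.fib_pos.2 (Nat.add_one_pos k)
  omega

theorem lucZ_ne_zero (r : ℤ) : lucZ r ≠ 0 := by
  obtain ⟨k, rfl | rfl⟩ := Int.eq_nat_or_neg r
  · exact (lucZ_natCast_pos k).ne'
  · intro h
    have := coe_lucZ_neg k
    simp [h, (lucZ_natCast_pos k).ne'] at this

theorem sum_neg_one_zpow_mul_fib_mul_lucZ (r : ℤ) (n : ℕ) :
    (∑ j ∈ range (2 * n),
        (-1 : ℚ) ^ ((j : ℤ) * (r + 1)) * Int.fib (r * (2 * (n : ℤ) - 2 * j - 1))) * lucZ r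
      = 2 * Int.fib (2 * r * n) := by
  let G (j : ℕ) : ℚ := (-1) ^ ((j : ℤ) * (r + 1)) * Int.fib (r * (2 * (n : ℤ) - 2 * j))
  have hterm (j : ℕ) :
      (-1 : ℚ) ^ ((j : ℤ) * (r + 1)) * Int.fib (r * (2 * (n : ℤ) - 2 * j - 1)) * lucZ r
        = G j - G (j + 1) := by
    have h := lucZ_mul_fib r (r * (2 * n - 2 * j - 1))
    rw [show r * (2 * n - 2 * j - 1) + r = r * (2 * n - 2 * j) by ring,
      show r * (2 * n - 2 * j - 1) - r = r * (2 * n - 2 * ((j : ℤ) + 1)) by ring] at h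
    simp only [G, Nat.cast_add_one, add_one_mul (j : ℤ),
      zpow_add₀ (by norm_num : (-1 : ℚ) ≠ 0)]
    linear_combination (-1 : ℚ) ^ ((j : ℤ) * (r + 1)) * h
  rw [sum_mul, sum_congr rfl fun j _ => hterm j, sum_range_sub']
  simp only [G]
  push_cast
  rw [zero_mul, zpow_zero, one_mul, Even.neg_one_zpow ⟨n * (r + 1), by ring⟩,
    show r * (2 * n - 0) = 2 * r * n by ring,
    show r * (2 * n - 2 * (2 * n)) = -(2 * r * n) by ring, Int.coe_fib_neg,
    Odd.neg_one_zpow ⟨r * n, by ring⟩]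
  ring

theorem sum_fib_add_sum_lucZ_mul_lucZ (r : ℤ) (n : ℕ) :
    ((∑ j ∈ range n,
        ((Int.fib r : ℚ) / 2) ^ (2 * j) * 5 ^ j * Int.fib (r * (2 * (n : ℤ) - 2 * j - 1)))
      + ∑ j ∈ Icc 1 n,
        ((Int.fib r : ℚ) / 2) ^ (2 * j - 1) * 5 ^ (j - 1) * lucZ (r * (2 * (n : ℤ) - 2 * j)))
      * lucZ r = 2 * Int.fib (2 * r * n) := by
  set c : ℚ := 5 * ((Int.fib r : ℚ) / 2) ^ 2
  let G (j : ℕ) : ℚ := c ^ j * Int.fib (r * (2 * (n : ℤ) - 2 * j))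
  have hfib : ∑ j ∈ range n,
        ((Int.fib r : ℚ) / 2) ^ (2 * j) * 5 ^ j * Int.fib (r * (2 * (n : ℤ) - 2 * j - 1))
      = ∑ j ∈ range n, c ^ j * Int.fib (r * (2 * (n : ℤ) - 2 * j - 1)) := by
    refine sum_congr rfl fun j _ => ?_
    simp only [c, mul_pow, ← pow_mul]
    ring
  have hlucZ : ∑ j ∈ Icc 1 n,
        ((Int.fib r : ℚ) / 2) ^ (2 * j - 1) * 5 ^ (j - 1) * lucZ (r * (2 * (n : ℤ) - 2 * j))
      = ∑ j ∈ range n, c ^ j * (Int.fib r / 2 * lucZ (r * (2 * (n : ℤ) - 2 * j - 2))) := by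
    rw [← Ico_add_one_right_eq_Icc, sum_Ico_eq_sum_range, add_tsub_cancel_right]
    refine sum_congr rfl fun j _ => ?_
    rw [show 2 * (1 + j) - 1 = 2 * j + 1 by omega, add_tsub_cancel_left]
    push_cast
    rw [show r * (2 * n - 2 * (1 + j)) = r * (2 * n - 2 * j - 2) by ring]
    simp only [c, mul_pow, ← pow_mul]
    ring
  have hterm (j : ℕ) : (c ^ j * Int.fib (r * (2 * (n : ℤ) - 2 * j - 1))
      + c ^ j * (Int.fib r / 2 * lucZ (r * (2 * (n : ℤ) - 2 * j - 2)))) * lucZ r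
      = 2 * (G j - G (j + 1)) := by
    have h : (lucZ r * (2 * Int.fib (r * (2 * n - 2 * j - 2) + r)
          + Int.fib r * lucZ (r * (2 * n - 2 * j - 2))) : ℚ)
        = 4 * Int.fib (r * (2 * n - 2 * j - 2) + 2 * r)
          - 5 * Int.fib r ^ 2 * Int.fib (r * (2 * n - 2 * j - 2)) := by
      exact_mod_cast lucZ_mul_two_mul_fib_add_fib_mul_lucZ (r * (2 * n - 2 * j - 2)) r
    rw [show r * (2 * n - 2 * j - 2) + r = r * (2 * n - 2 * j - 1) by ring,
      show r * (2 * n - 2 * j - 2) + 2 * r = r * (2 * n - 2 * j) by ring] at h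
    simp only [G, c, pow_succ]
    push_cast
    rw [show r * (2 * n - 2 * (j + 1)) = r * (2 * n - 2 * j - 2) by ring]
    linear_combination c ^ j / 2 * h
  rw [hfib, hlucZ, ← sum_add_distrib, sum_mul, sum_congr rfl fun j _ => hterm j, ← mul_sum,
    sum_range_sub']
  simp only [G]
  push_cast
  rw [show r * (2 * n - 0) = 2 * r * n by ring, sub_self, mul_zero, Int.fib_zero]
  ring

theorem thm2_fib_even_sum (r : ℤ) (n : ℕ) :
    (∑ j ∈ Finset.range (2 * n),
        (-1 : ℚ) ^ ((j : ℤ) * (r + 1)) * (fibZ (r * (2 * (n : ℤ) - 2 * j - 1)) : ℚ)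
      = (∑ j ∈ Finset.range n,
          ((fibZ r : ℚ) / 2) ^ (2 * j) * 5 ^ j
            * (fibZ (r * (2 * (n : ℤ) - 2 * j - 1)) : ℚ))
        + ∑ j ∈ Finset.Icc 1 n,
          ((fibZ r : ℚ) / 2) ^ (2 * j - 1) * 5 ^ (j - 1)
            * (lucZ (r * (2 * (n : ℤ) - 2 * j)) : ℚ)) ∧
    (∑ j ∈ Finset.range (2 * n),
        (-1 : ℚ) ^ ((j : ℤ) * (r + 1)) * (fibZ (r * (2 * (n : ℤ) - 2 * j - 1)) : ℚ)
      = 2 * (fibZ (2 * r * (n : ℤ)) : ℚ) / (lucZ r : ℚ)) := by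
  have hL : (lucZ r : ℚ) ≠ 0 := Int.cast_ne_zero.2 (lucZ_ne_zero r)
  have hS := sum_neg_one_zpow_mul_fib_mul_lucZ r n
  have hR := sum_fib_add_sum_lucZ_mul_lucZ r n
  rw [fibZ_eq_intFib]
  exact ⟨mul_right_cancel₀ hL (hS.trans hR.symm), eq_div_of_mul_eq hL hS⟩
end

section
/- For every nonzero integer r and every positive integer n, the integer 5·F_r² divides (−1)^{r+1} F_{2r(n+1)} + (−1)^{r(n+1)} F_{2r} + F_{2rn} (divisibility in the ring of integers). -/
open Nat in
lemma my_cassini (s : ℕ) : (fib (s+2) : ℤ) * fib s = (fib (s+1))^2 + (-1)^(s+1) := by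
  induction s with
  | zero => simp
  | succ t ih =>
    have h1 : fib (t+3) = fib (t+1) + fib (t+2) := Nat.fib_add_two
    have h2 : fib (t+2) = fib t + fib (t+1) := Nat.fib_add_two
    push_cast [h1, h2] at *
    ring_nf at ih ⊢
    nlinarith [ih]

open Nat in
lemma my_lucas_two_mul (t : ℕ) :
    (fib (2*t+3) : ℤ) + fib (2*t+1) = 5 * (fib (t+1):ℤ)^2 + 2*(-1)^(t+1) := by
  have h1 : fib (2*t+3) = fib (t+2)^2 + fib (t+1)^2 := by
    rw [show 2*t+3 = 2*(t+1)+1 by ring, fib_two_mul_add_one]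
  have h2 : fib (2*t+1) = fib (t+1)^2 + fib t ^2 := fib_two_mul_add_one t
  have h3 : fib (t+2) = fib t + fib (t+1) := Nat.fib_add_two
  have hc := my_cassini t
  push_cast [h1, h2, h3] at *
  nlinarith [hc]

open Nat in
lemma my_addF (t : ℕ) : ∀ s : ℕ,
    (fib (s + 4*(t+1)) : ℤ) + fib s
      = ((fib (2*t+3) : ℤ) + fib (2*t+1)) * fib (s + 2*(t+1)) := by
  intro s
  induction s using Nat.twoStepInduction with
  | zero =>
    have h : fib (0 + 4*(t+1)) = fib (2*t+1) * fib (2*t+2) + fib (2*t+2) * fib (2*t+3) := by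
      rw [show 0+4*(t+1) = (2*t+1) + (2*t+2) + 1 by ring, fib_add]
    push_cast [h]
    have h2 : (0:ℕ) + 2*(t+1) = 2*t+2 := by ring
    rw [h2]; push_cast; ring
  | one =>
    have h : fib (1 + 4*(t+1)) = fib (2*t+3)^2 + fib (2*t+2)^2 := by
      rw [show 1+4*(t+1) = 2*(2*t+2)+1 by ring, fib_two_mul_add_one]
    have hc := my_cassini (2*t+1)
    rw [show 2*t+1+2 = 2*t+3 by ring, show 2*t+1+1 = 2*t+2 by ring,
      show ((-1:ℤ))^(2*t+2) = 1 by rw [pow_add]; simp [pow_mul]] at hc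
    have h2 : (1:ℕ) + 2*(t+1) = 2*t+3 := by ring
    rw [h2, h]
    push_cast [Nat.fib_one]
    linear_combination -hc
  | more s ih ih1 =>
    have e1 : s + 2 + 4*(t+1) = (s + 4*(t+1)) + 2 := by ring
    have e2 : s + 2 + 2*(t+1) = (s + 2*(t+1)) + 2 := by ring
    have e3 : s + 1 + 4*(t+1) = (s + 4*(t+1)) + 1 := by ring
    have e4 : s + 1 + 2*(t+1) = (s + 2*(t+1)) + 1 := by ring
    rw [e1, e2]
    rw [e3, e4] at ih1
    have r1 : fib ((s + 4*(t+1)) + 2) = fib (s + 4*(t+1)) + fib ((s + 4*(t+1)) + 1) :=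
      Nat.fib_add_two
    have r2 : fib ((s + 2*(t+1)) + 2) = fib (s + 2*(t+1)) + fib ((s + 2*(t+1)) + 1) :=
      Nat.fib_add_two
    have r3 : fib (s + 2) = fib s + fib (s+1) := Nat.fib_add_two
    push_cast [r1, r2, r3]
    linarith [ih, ih1]

open Nat in
lemma my_key (t : ℕ) : ∀ k : ℕ, (5*((fib (t+1)):ℤ)^2) ∣
    (fib (2*(t+1)*k) : ℤ) - k * (-1)^((t+1)*(k+1)) * fib (2*(t+1)) := by
  intro k
  induction k using Nat.twoStepInduction with
  | zero => simp
  | one =>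
    have : ((-1:ℤ))^((t+1)*(1+1)) = 1 := by
      rw [show (t+1)*(1+1) = 2*(t+1) by ring, pow_mul]; norm_num
    rw [this]
    simp [mul_comm]
  | more k ih ih1 =>
    obtain ⟨x, hx⟩ := ih
    obtain ⟨y, hy⟩ := ih1
    have hA := my_addF t (2*(t+1)*k)
    rw [show 2*(t+1)*k + 4*(t+1) = 2*(t+1)*(k+2) by ring,
        show 2*(t+1)*k + 2*(t+1) = 2*(t+1)*(k+1) by ring] at hA
    have hB := my_lucas_two_mul t
    have p1 : ((-1:ℤ))^((t+1)*(k+2+1)) = (-1)^((t+1)*(k+1)) := by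
      rw [show (t+1)*(k+2+1) = (t+1)*(k+1) + 2*(t+1) by ring, pow_add, pow_mul]
      norm_num
    have p2 : ((-1:ℤ))^(t+1) * (-1)^((t+1)*(k+1+1)) = (-1)^((t+1)*(k+1)) := by
      rw [← pow_add, show (t+1) + (t+1)*(k+1+1) = (t+1)*(k+1) + 2*(t+1) by ring,
        pow_add, pow_mul]
      norm_num
    refine ⟨((fib (2*t+3) : ℤ) + fib (2*t+1)) * y - x
      + (k+1) * (-1)^((t+1)*(k+1+1)) * fib (2*(t+1)), ?_⟩
    push_cast
    push_cast at hx hy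
    linear_combination hA - hx + ((fib (2*t+3) : ℤ) + fib (2*t+1)) * hy
      + ((k+1) * ((-1:ℤ))^((t+1)*(k+1+1)) * fib (2*(t+1))) * hB
      + (2*(k+1) * (fib (2*(t+1)) : ℤ)) * p2 - ((k+2) * (fib (2*(t+1)) : ℤ)) * p1

lemma fibZ_natCast (k : ℕ) : fibZ (k : ℤ) = Nat.fib k := by
  simp [fibZ]

lemma negOnePow_natCast' (k : ℕ) : (((k : ℤ).negOnePow : ℤ)) = (-1 : ℤ)^k := by
  rcases Nat.even_or_odd k with h | h
  · rw [Int.negOnePow_even _ (by exact_mod_cast h), h.neg_one_pow]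
    norm_num
  · rw [Int.negOnePow_odd _ (by exact_mod_cast h), h.neg_one_pow]
    norm_num

lemma fibZ_neg (m : ℤ) : fibZ (-m) = -((m.negOnePow : ℤ) * fibZ m) := by
  rcases lt_trichotomy m 0 with h | h | h
  · have h1 : ¬ (0 ≤ m) := not_le.mpr h
    have h2 : (0:ℤ) ≤ -m := by omega
    have h3 : (-m).toNat = m.natAbs := by omega
    simp only [fibZ, if_pos h2, if_neg h1, h3]
    have hp : ((m.negOnePow : ℤ)) = (-1 : ℤ)^(m.natAbs) := by
      rw [← Int.negOnePow_abs, show |m| = (m.natAbs : ℤ) from (Int.abs_eq_natAbs m),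
        negOnePow_natCast']
    rcases Nat.even_or_odd m.natAbs with he | he
    · rw [hp, he.neg_one_pow, (he.add_one).neg_one_pow]; ring
    · rw [hp, he.neg_one_pow, (he.add_one).neg_one_pow]; ring
  · subst h; simp [fibZ]
  · have h1 : (0:ℤ) ≤ m := h.le
    have h2 : ¬ ((0:ℤ) ≤ -m) := by omega
    have h3 : (-m).natAbs = m.natAbs := by simp
    have h4 : m.toNat = m.natAbs := by omega
    simp only [fibZ, if_pos h1, if_neg h2, h3, h4]
    have hp : ((m.negOnePow : ℤ)) = (-1 : ℤ)^(m.natAbs) := by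
      rw [← Int.negOnePow_abs, show |m| = (m.natAbs : ℤ) from (Int.abs_eq_natAbs m),
        negOnePow_natCast']
    rcases Nat.even_or_odd m.natAbs with he | he
    · rw [hp, he.neg_one_pow, (he.add_one).neg_one_pow]; ring
    · rw [hp, he.neg_one_pow, (he.add_one).neg_one_pow]; ring

lemma main_pos (s : ℤ) (hs : 0 < s) (n : ℕ) :
    (5 * fibZ s ^ 2)
      ∣ ((s + 1).negOnePow : ℤ) * fibZ (2 * s * ((n : ℤ) + 1))
        + ((s * ((n : ℤ) + 1)).negOnePow : ℤ) * fibZ (2 * s)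
        + fibZ (2 * s * (n : ℤ)) := by
  lift s to ℕ using hs.le with m
  have hm : 0 < m := by exact_mod_cast hs
  obtain ⟨t, rfl⟩ : ∃ t, m = t + 1 := ⟨m - 1, by omega⟩
  -- rewrite all fibZ's as Nat.fib
  have i1 : (2 : ℤ) * ((t+1 : ℕ) : ℤ) * ((n : ℤ) + 1) = ((2*(t+1)*(n+1) : ℕ) : ℤ) := by
    push_cast; ring
  have i2 : (2 : ℤ) * ((t+1 : ℕ) : ℤ) = ((2*(t+1) : ℕ) : ℤ) := by push_cast; ring
  have i3 : (2 : ℤ) * ((t+1 : ℕ) : ℤ) * (n : ℤ) = ((2*(t+1)*n : ℕ) : ℤ) := by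
    push_cast; ring
  have e1 : ((t+1 : ℕ) : ℤ) + 1 = ((t+2 : ℕ) : ℤ) := by push_cast; ring
  have e2 : ((t+1 : ℕ) : ℤ) * ((n : ℤ) + 1) = (((t+1)*(n+1) : ℕ) : ℤ) := by
    push_cast; ring
  rw [i1, i3, i2, e1, e2, fibZ_natCast, fibZ_natCast, fibZ_natCast, fibZ_natCast,
    negOnePow_natCast', negOnePow_natCast']
  obtain ⟨x, hx⟩ := my_key t (n+1)
  obtain ⟨y, hy⟩ := my_key t n
  have q : ((-1:ℤ))^(t+2) * (-1)^((t+1)*(n+1+1)) = -(-1)^((t+1)*(n+1)) := by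
    rw [← pow_add, show (t+2) + (t+1)*(n+1+1) = ((t+1)*(n+1) + 1) + 2*(t+1) by ring,
      pow_add, pow_mul, pow_succ]
    norm_num
  refine ⟨(-1)^(t+2) * x + y, ?_⟩
  push_cast at hx hy ⊢
  linear_combination ((-1:ℤ))^(t+2) * hx + hy + ((n:ℤ)+1) * (Nat.fib (2*(t+1)) : ℤ) * q

theorem cor_five_fr_sq_dvd (r : ℤ) (hr : r ≠ 0) (n : ℕ) (hn : 0 < n) :
    (5 * fibZ r ^ 2)
      ∣ ((r + 1).negOnePow : ℤ) * fibZ (2 * r * ((n : ℤ) + 1))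
        + ((r * ((n : ℤ) + 1)).negOnePow : ℤ) * fibZ (2 * r)
        + fibZ (2 * r * (n : ℤ)) := by
  rcases hr.lt_or_gt with h | h
  · -- r < 0, set s := -r
    set s := -r with hs
    have hspos : 0 < s := by omega
    have f1 : fibZ (2 * r * ((n : ℤ) + 1)) = - fibZ (2 * s * ((n : ℤ) + 1)) := by
      rw [show 2 * r * ((n : ℤ) + 1) = -(2 * s * ((n : ℤ) + 1)) by rw [hs]; ring,
        fibZ_neg, show 2 * s * ((n : ℤ) + 1) = 2 * (s * ((n : ℤ) + 1)) by ring,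
        Int.negOnePow_two_mul]
      push_cast; ring
    have f2 : fibZ (2 * r) = - fibZ (2 * s) := by
      rw [show 2 * r = -(2 * s) by rw [hs]; ring, fibZ_neg, Int.negOnePow_two_mul]
      push_cast; ring
    have f3 : fibZ (2 * r * (n : ℤ)) = - fibZ (2 * s * (n : ℤ)) := by
      rw [show 2 * r * (n : ℤ) = -(2 * s * (n : ℤ)) by rw [hs]; ring,
        fibZ_neg, show 2 * s * (n : ℤ) = 2 * (s * (n : ℤ)) by ring,
        Int.negOnePow_two_mul]
      push_cast; ring
    have g1 : (r + 1).negOnePow = (s + 1).negOnePow := by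
      rw [Int.negOnePow_eq_iff]
      exact ⟨r, by rw [hs]; ring⟩
    have g2 : (r * ((n : ℤ) + 1)).negOnePow = (s * ((n : ℤ) + 1)).negOnePow := by
      rw [show r * ((n : ℤ) + 1) = -(s * ((n : ℤ) + 1)) by rw [hs]; ring,
        Int.negOnePow_neg]
    have g3 : fibZ r ^ 2 = fibZ s ^ 2 := by
      rw [show r = -s by rw [hs]; ring, fibZ_neg]
      rcases Int.units_eq_one_or s.negOnePow with hu | hu <;> rw [hu] <;> push_cast <;> ring
    rw [f1, f2, f3, g1, g2, g3]
    have := main_pos s hspos n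
    rw [show ((s + 1).negOnePow : ℤ) * -fibZ (2 * s * ((n : ℤ) + 1))
        + ((s * ((n : ℤ) + 1)).negOnePow : ℤ) * -fibZ (2 * s) + -fibZ (2 * s * (n : ℤ))
      = -(((s + 1).negOnePow : ℤ) * fibZ (2 * s * ((n : ℤ) + 1))
        + ((s * ((n : ℤ) + 1)).negOnePow : ℤ) * fibZ (2 * s)
        + fibZ (2 * s * (n : ℤ))) by ring]
    exact (dvd_neg).mpr this
  · exact main_pos r h n
end

section
/- Let r, k, s be integers with k + r ≠ 0 and k + s ≠ 0, and let n be a non-negative integer. Then 2·Σ_{j=0}^{n} (−1)^{(k+s)j} L_{r−s}^j L_{2k+r+s}^{n−j} = Σ_{j=0}^{n} (L_{k+r} L_{k+s}/2)^j (L_{2k+r+s}^{n−j} + (−1)^{(k+s)(n−j)} L_{r−s}^{n−j}) = 2·(L_{2k+r+s}^{n+1} − (−1)^{(k+s)(n+1)} L_{r−s}^{n+1}) / (5·F_{k+r}·F_{k+s}). -/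
/-!
Put `a = L_{2k+r+s}` and `b = (-1)^{k+s} L_{r-s}`. Binet's formula, together with `φψ = -1`,
gives `a + b = L_{k+r} L_{k+s}` and `a - b = 5 F_{k+r} F_{k+s}`. The first sum is the homogeneous
sum `Σ b^j a^{n-j}`; its other two forms are an expansion around `(a + b) / 2` and the
two-variable geometric sum `(a^{n+1} - b^{n+1}) / (a - b)`, the latter needing
`F_{k+r} F_{k+s} ≠ 0`.
-/

open Finset

open Real
open scoped goldenRatio

theorem two_mul_geom_sum₂_eq_sum {R : Type*} [CommRing R] {a b c : R} (hc : 2 * c = a + b)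
    (n : ℕ) :
    2 * ∑ i ∈ range (n + 1), b ^ i * a ^ (n - i)
      = ∑ i ∈ range (n + 1), c ^ i * (a ^ (n - i) + b ^ (n - i)) := by
  induction n with
  | zero => norm_num
  | succ n ih =>
    set S := ∑ i ∈ range (n + 1), b ^ i * a ^ (n - i)
    have hb : ∑ i ∈ range (n + 1 + 1), b ^ i * a ^ (n + 1 - i) = b ^ (n + 1) + a * S := by
      simpa using geom_sum₂_succ_eq b a (n := n + 1)
    have ha : ∑ i ∈ range (n + 1 + 1), b ^ i * a ^ (n + 1 - i) = a ^ (n + 1) + b * S := by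
      rw [sum_range_succ', mul_sum]
      simp [pow_succ', mul_assoc, add_comm]
    conv_rhs => rw [sum_range_succ']
    simp only [Nat.add_sub_add_right, pow_succ', mul_assoc, ← mul_sum, ← ih, pow_zero, one_mul,
      Nat.sub_zero]
    linear_combination ha + hb - S * hc

theorem neg_one_zpow_mul_natCast_mul_pow {K : Type*} [Field K] (p : ℤ) (x : K) (m : ℕ) :
    (-1 : K) ^ (p * m) * x ^ m = ((-1) ^ p * x) ^ m := by
  rw [zpow_mul, zpow_natCast, mul_pow]

theorem neg_one_zpow_mul_zpow_sub {K : Type*} [Field K] {x y : K} (hxy : x * y = -1)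
    (m p : ℤ) : (-1 : K) ^ p * x ^ (m - p) = x ^ m * y ^ p := by
  have hx : x ≠ 0 := left_ne_zero_of_mul (hxy ▸ neg_ne_zero.mpr one_ne_zero)
  rw [← hxy, mul_zpow, zpow_sub₀ hx, mul_right_comm, mul_div_cancel₀ _ (zpow_ne_zero p hx)]

theorem fibZ_eq_fib (n : ℤ) : fibZ n = Int.fib n := by
  obtain ⟨m, rfl | rfl⟩ := n.eq_nat_or_neg
  · simp [fibZ]
  · rcases m.eq_zero_or_pos with rfl | hm
    · simp [fibZ]
    · rw [Int.fib_neg_natCast, fibZ, if_neg (by omega), Int.natAbs_neg, Int.natAbs_natCast]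

theorem coe_fibZ_eq (n : ℤ) : (fibZ n : ℝ) = (φ ^ n - ψ ^ n) / √5 := by
  rw [fibZ_eq_fib, coe_intFib_eq]

theorem coe_lucZ_eq (n : ℤ) : (lucZ n : ℝ) = φ ^ n + ψ ^ n := by
  have h5 : √5 ≠ 0 := by positivity
  rw [lucZ, Int.cast_add, coe_fibZ_eq, coe_fibZ_eq, ← add_div, div_eq_iff h5,
    zpow_add_one₀ goldenRatio_ne_zero, zpow_add_one₀ goldenConj_ne_zero,
    zpow_sub_one₀ goldenRatio_ne_zero, zpow_sub_one₀ goldenConj_ne_zero,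
    inv_goldenRatio, inv_goldenConj, ← goldenRatio_sub_goldenConj]
  ring

theorem lucZ_add_add_negOnePow_mul_lucZ_sub (m p : ℤ) :
    lucZ (m + p) + p.negOnePow * lucZ (m - p) = lucZ m * lucZ p := by
  apply Int.cast_injective (α := ℝ)
  push_cast [Int.cast_negOnePow, coe_lucZ_eq]
  rw [mul_add, neg_one_zpow_mul_zpow_sub goldenRatio_mul_goldenConj,
    neg_one_zpow_mul_zpow_sub goldenConj_mul_goldenRatio, zpow_add₀ goldenRatio_ne_zero,
    zpow_add₀ goldenConj_ne_zero]
  ring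

theorem lucZ_add_sub_negOnePow_mul_lucZ_sub (m p : ℤ) :
    lucZ (m + p) - p.negOnePow * lucZ (m - p) = 5 * fibZ m * fibZ p := by
  apply Int.cast_injective (α := ℝ)
  push_cast [Int.cast_negOnePow, coe_lucZ_eq, coe_fibZ_eq]
  rw [mul_add, neg_one_zpow_mul_zpow_sub goldenRatio_mul_goldenConj,
    neg_one_zpow_mul_zpow_sub goldenConj_mul_goldenRatio, zpow_add₀ goldenRatio_ne_zero,
    zpow_add₀ goldenConj_ne_zero, mul_assoc, div_mul_div_comm,
    mul_self_sqrt (by norm_num : (0 : ℝ) ≤ 5), mul_div_cancel₀ _ (by norm_num : (5 : ℝ) ≠ 0)]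
  ring

theorem thm8_sums (r k s : ℤ) (hkr : k + r ≠ 0) (hks : k + s ≠ 0) (n : ℕ) :
    (2 * ∑ j ∈ Finset.range (n + 1),
        (-1 : ℚ) ^ ((k + s) * (j : ℤ)) * (lucZ (r - s) : ℚ) ^ j
          * (lucZ (2 * k + r + s) : ℚ) ^ (n - j)
      = ∑ j ∈ Finset.range (n + 1),
        ((lucZ (k + r) : ℚ) * (lucZ (k + s) : ℚ) / 2) ^ j
          * ((lucZ (2 * k + r + s) : ℚ) ^ (n - j)
            + (-1 : ℚ) ^ ((k + s) * ((n : ℤ) - j)) * (lucZ (r - s) : ℚ) ^ (n - j))) ∧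
    (2 * ∑ j ∈ Finset.range (n + 1),
        (-1 : ℚ) ^ ((k + s) * (j : ℤ)) * (lucZ (r - s) : ℚ) ^ j
          * (lucZ (2 * k + r + s) : ℚ) ^ (n - j)
      = 2 * ((lucZ (2 * k + r + s) : ℚ) ^ (n + 1)
          - (-1 : ℚ) ^ ((k + s) * ((n : ℤ) + 1)) * (lucZ (r - s) : ℚ) ^ (n + 1))
        / (5 * (fibZ (k + r) : ℚ) * (fibZ (k + s) : ℚ))) := by
  have hm : k + r + (k + s) = 2 * k + r + s := by ring
  have hp : k + r - (k + s) = r - s := by ring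
  have hsum := congrArg (Int.cast : ℤ → ℚ)
    (lucZ_add_add_negOnePow_mul_lucZ_sub (k + r) (k + s))
  have hdiff := congrArg (Int.cast : ℤ → ℚ)
    (lucZ_add_sub_negOnePow_mul_lucZ_sub (k + r) (k + s))
  push_cast [Int.cast_negOnePow, hm, hp] at hsum hdiff
  set a : ℚ := (lucZ (2 * k + r + s) : ℚ)
  set b : ℚ := (-1) ^ (k + s) * (lucZ (r - s) : ℚ)
  have hS : ∑ j ∈ range (n + 1),
        (-1 : ℚ) ^ ((k + s) * (j : ℤ)) * (lucZ (r - s) : ℚ) ^ j * a ^ (n - j)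
      = ∑ j ∈ range (n + 1), b ^ j * a ^ (n - j) :=
    sum_congr rfl fun j _ => by rw [neg_one_zpow_mul_natCast_mul_pow]
  have hT : ∑ j ∈ range (n + 1), ((lucZ (k + r) : ℚ) * (lucZ (k + s) : ℚ) / 2) ^ j
        * (a ^ (n - j) + (-1 : ℚ) ^ ((k + s) * ((n : ℤ) - j)) * (lucZ (r - s) : ℚ) ^ (n - j))
      = ∑ j ∈ range (n + 1), ((a + b) / 2) ^ j * (a ^ (n - j) + b ^ (n - j)) :=
    sum_congr rfl fun j hj => by
      rw [← Nat.cast_sub (Nat.lt_succ_iff.mp (mem_range.mp hj)),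
        neg_one_zpow_mul_natCast_mul_pow, hsum]
  rw [hS, hT, show (n : ℤ) + 1 = ((n + 1 : ℕ) : ℤ) by push_cast; rfl,
    neg_one_zpow_mul_natCast_mul_pow, ← hdiff]
  refine ⟨two_mul_geom_sum₂_eq_sum (mul_div_cancel₀ _ two_ne_zero) n, ?_⟩
  have hne : a - b ≠ 0 := by
    rw [hdiff]
    simp [fibZ_eq_fib, hkr, hks]
  have hgeom := geom_sum₂_mul b a (n + 1)
  simp only [Nat.add_sub_cancel] at hgeom
  rw [eq_div_iff hne]
  linear_combination -2 * hgeom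
end

section
/- Let x be a complex number with x ≠ 0 and F_r(x) ≠ 0, let n be a non-negative integer and r a positive integer. Then 2·Σ_{j=0}^{n} F_{r−1}(x)^j F_{r+1}(x)^{n−j} = Σ_{j=0}^{n} (L_r(x)/2)^j (F_{r+1}(x)^{n−j} + F_{r−1}(x)^{n−j}), and the common value of these two sums equals 2·(F_{r+1}(x)^{n+1} − F_{r−1}(x)^{n+1}) / (x·F_r(x)). -/
open Finset

/-- Fibonacci polynomials at `x`, natural index. -/
def fibPolyAux (x : ℂ) : ℕ → ℂ
  | 0 => 0
  | 1 => 1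
  | n + 2 => x * fibPolyAux x (n + 1) + fibPolyAux x n

/-- Fibonacci polynomials at `x`, integer index:
`F (-n) (x) = (-1)^(n+1) * F n (x)`. -/
def fibPoly (x : ℂ) (n : ℤ) : ℂ :=
  if 0 ≤ n then fibPolyAux x n.toNat else (-1) ^ (n.natAbs + 1) * fibPolyAux x n.natAbs

/-- Lucas polynomials at `x`, integer index: `L n (x) = F (n+1) (x) + F (n-1) (x)`. -/
def lucasPoly (x : ℂ) (n : ℤ) : ℂ := fibPoly x (n + 1) + fibPoly x (n - 1)

lemma fibPoly_natCast (x : ℂ) (k : ℕ) : fibPoly x (k : ℤ) = fibPolyAux x k := by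
  simp [fibPoly]

lemma geom_aux (u v : ℂ) (h : u ≠ v) (n : ℕ) :
    ∑ j ∈ Finset.range (n + 1), u ^ j * v ^ (n - j)
      = (u ^ (n + 1) - v ^ (n + 1)) / (u - v) := by
  have huv : u - v ≠ 0 := sub_ne_zero.mpr h
  have := geom_sum₂_mul u v (n + 1)
  rw [eq_div_iff huv]
  simpa using this

theorem fibpol_thm3 (x : ℂ) (hx : x ≠ 0) (r : ℤ) (hr : 0 < r) (hFr : fibPoly x r ≠ 0)
    (n : ℕ) :
    (2 * ∑ j ∈ Finset.range (n + 1),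
        fibPoly x (r - 1) ^ j * fibPoly x (r + 1) ^ (n - j)
      = ∑ j ∈ Finset.range (n + 1),
        (lucasPoly x r / 2) ^ j
          * (fibPoly x (r + 1) ^ (n - j) + fibPoly x (r - 1) ^ (n - j))) ∧
    (2 * ∑ j ∈ Finset.range (n + 1),
        fibPoly x (r - 1) ^ j * fibPoly x (r + 1) ^ (n - j)
      = 2 * (fibPoly x (r + 1) ^ (n + 1) - fibPoly x (r - 1) ^ (n + 1))
          / (x * fibPoly x r)) := by
  obtain ⟨k, rfl⟩ : ∃ k : ℕ, r = (k : ℤ) + 1 := by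
    refine ⟨(r - 1).toNat, ?_⟩
    omega
  set a : ℂ := fibPoly x ((k : ℤ) + 1 + 1) with ha
  set b : ℂ := fibPoly x ((k : ℤ) + 1 - 1) with hb
  have hrec : a - b = x * fibPoly x ((k : ℤ) + 1) := by
    have h1 : ((k : ℤ) + 1 + 1) = ((k + 2 : ℕ) : ℤ) := by push_cast; ring
    have h2 : ((k : ℤ) + 1) = ((k + 1 : ℕ) : ℤ) := by push_cast; ring
    have h3 : ((k : ℤ) + 1 - 1) = ((k : ℕ) : ℤ) := by push_cast; ring
    rw [ha, hb, h1, h3, h2, fibPoly_natCast, fibPoly_natCast, fibPoly_natCast]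
    rw [show fibPolyAux x (k + 2) = x * fibPolyAux x (k + 1) + fibPolyAux x k from rfl]
    ring
  have hab : a - b ≠ 0 := by
    rw [hrec]; exact mul_ne_zero hx hFr
  have hne : b ≠ a := fun h => hab (by rw [h]; ring)
  have hL : lucasPoly x ((k : ℤ) + 1) = a + b := by
    simp [lucasPoly, ha, hb]
  set c : ℂ := (a + b) / 2 with hc
  have hba' : b - a ≠ 0 := sub_ne_zero.mpr hne
  have hc2a : c - a = (b - a) / 2 := by rw [hc]; ring
  have hc2b : c - b = (a - b) / 2 := by rw [hc]; ring
  have hca' : c - a ≠ 0 := by rw [hc2a]; exact div_ne_zero hba' two_ne_zero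
  have hcb' : c - b ≠ 0 := by rw [hc2b]; exact div_ne_zero hab two_ne_zero
  have hca : c ≠ a := sub_ne_zero.mp hca'
  have hcb : c ≠ b := sub_ne_zero.mp hcb'
  have g1 := geom_aux b a hne n
  have g2 := geom_aux c a hca n
  have g3 := geom_aux c b (fun h => hcb h) n
  constructor
  · rw [g1]
    have : ∑ j ∈ Finset.range (n + 1),
        (lucasPoly x ((k : ℤ) + 1) / 2) ^ j * (a ^ (n - j) + b ^ (n - j))
        = (∑ j ∈ Finset.range (n + 1), c ^ j * a ^ (n - j))
          + ∑ j ∈ Finset.range (n + 1), c ^ j * b ^ (n - j) := by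
      rw [← Finset.sum_add_distrib]
      refine Finset.sum_congr rfl fun j _ => ?_
      rw [hL, ← hc]; ring
    rw [this, g2, g3, hc2a, hc2b]
    field_simp
    ring
  · rw [g1, ← hrec]
    have hab' : a - b ≠ 0 := hab
    field_simp
    ring
end
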